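/- arXiv:1507.01762 — 3 statements merged into one kernel-verified Lean document; each statement's English description precedes it below -/
import Mathlib

section
/- Suppose complex numbers d_1,…,d_n satisfy arg(d_k) ∈ [0, π/2 + θ] for all k (with θ ∈ [0, π/2)), and a subset S ⊆ {1,…,n} satisfies |∑_{k∈S} d_k| ≤ C with ∑_{k∈S} Im(d_k) ≥ 0. Then ∑_{k∈S} Im(d_k) ≤ C, ∑_{k∈S, Re(d_k)<0} (−Re(d_k)) ≤ C·tan θ, and ∑_{k∈S, Re(d_k)≥0} Re(d_k) ≤ C(1 + tan θ). -/
/-!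
A demand `z` with `0 ≤ arg z ≤ π/2 + θ` lies within a right angle of the direction `e^{iθ}`,
so `re z · cos θ + im z · sin θ ≥ 0`, i.e. `-re z ≤ im z · tan θ`. Summing over the demands with
negative real part bounds their total by `tan θ` times the total imaginary part, which is at most
`‖∑ d_k‖ ≤ C`; the nonnegative real parts then sum to `re (∑ d_k)` plus that same total.
-/

open Real Finset

namespace Complex

theorem re_mul_cos_add_im_mul_sin_nonneg {z : ℂ} {θ : ℝ}
    (h : arg z ∈ Set.Icc (θ - π / 2) (θ + π / 2)) :
    0 ≤ z.re * Real.cos θ + z.im * Real.sin θ := by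
  have hcos : 0 ≤ Real.cos (arg z - θ) :=
    Real.cos_nonneg_of_mem_Icc ⟨by linarith [h.1], by linarith [h.2]⟩
  calc 0 ≤ ‖z‖ * Real.cos (arg z - θ) := mul_nonneg (norm_nonneg z) hcos
    _ = z.re * Real.cos θ + z.im * Real.sin θ := by
      rw [Real.cos_sub, ← norm_mul_cos_arg, ← norm_mul_sin_arg]
      ring

theorem neg_re_le_im_mul_tan {z : ℂ} {θ : ℝ} (hcos : 0 < Real.cos θ)
    (h : arg z ∈ Set.Icc (θ - π / 2) (θ + π / 2)) :
    -z.re ≤ z.im * Real.tan θ := by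
  have := re_mul_cos_add_im_mul_sin_nonneg h
  rw [Real.tan_eq_sin_div_cos, ← mul_div_assoc, le_div_iff₀ hcos]
  linarith

variable {ι : Type*} (s : Finset ι) (f : ι → ℂ)

theorem sum_filter_re_nonneg_eq :
    ∑ k ∈ s.filter (fun k => 0 ≤ (f k).re), (f k).re
      = (∑ k ∈ s, f k).re + ∑ k ∈ s.filter (fun k => (f k).re < 0), -(f k).re := by
  simp only [re_sum, sum_neg_distrib, ← not_le]
  linarith [sum_filter_add_sum_filter_not s (fun k => 0 ≤ (f k).re) (fun k => (f k).re)]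

theorem sum_filter_re_neg_neg_le {t : ℝ} (ht : 0 ≤ t) (him : ∀ k ∈ s, 0 ≤ (f k).im)
    (hre : ∀ k ∈ s, -(f k).re ≤ (f k).im * t) :
    ∑ k ∈ s.filter (fun k => (f k).re < 0), -(f k).re ≤ (∑ k ∈ s, f k).im * t := by
  rw [im_sum, sum_mul]
  calc ∑ k ∈ s.filter (fun k => (f k).re < 0), -(f k).re
      ≤ ∑ k ∈ s.filter (fun k => (f k).re < 0), (f k).im * t :=
        sum_le_sum fun k hk => hre k (mem_filter.mp hk).1
    _ ≤ ∑ k ∈ s, (f k).im * t :=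
        sum_le_sum_of_subset_of_nonneg (filter_subset _ _)
          fun k hk _ => mul_nonneg (him k hk) ht

end Complex

theorem projection_bounds_general (n : ℕ) (d : Fin n → ℂ) (θ C : ℝ)
    (hθ : θ ∈ Set.Ico 0 (Real.pi / 2))
    (harg : ∀ k, Complex.arg (d k) ∈ Set.Icc 0 (Real.pi / 2 + θ))
    (S : Finset (Fin n))
    (hcap : ‖∑ k ∈ S, d k‖ ≤ C) :
    (∑ k ∈ S, (d k).im ≤ C) ∧
    (∑ k ∈ S.filter (fun k => (d k).re < 0), (-(d k).re) ≤ C * Real.tan θ) ∧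
    (∑ k ∈ S.filter (fun k => 0 ≤ (d k).re), (d k).re ≤ C * (1 + Real.tan θ)) := by
  obtain ⟨hθ0, hθπ⟩ := hθ
  have hcos : 0 < Real.cos θ := Real.cos_pos_of_mem_Ioo ⟨by linarith [Real.pi_pos], hθπ⟩
  have htan : 0 ≤ Real.tan θ := Real.tan_nonneg_of_nonneg_of_le_pi_div_two hθ0 hθπ.le
  have him : ∀ k ∈ S, 0 ≤ (d k).im := fun k _ => Complex.arg_nonneg_iff.mp (harg k).1
  have hImC : (∑ k ∈ S, d k).im ≤ C := (Complex.im_le_norm _).trans hcap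
  have hneg : ∑ k ∈ S.filter (fun k => (d k).re < 0), -(d k).re ≤ C * Real.tan θ :=
    calc _ ≤ (∑ k ∈ S, d k).im * Real.tan θ :=
          Complex.sum_filter_re_neg_neg_le S d htan him fun k _ =>
            Complex.neg_re_le_im_mul_tan hcos ⟨by linarith [(harg k).1], by linarith [(harg k).2]⟩
      _ ≤ C * Real.tan θ := mul_le_mul_of_nonneg_right hImC htan
  refine ⟨Complex.im_sum S d ▸ hImC, hneg, ?_⟩
  rw [Complex.sum_filter_re_nonneg_eq]
  linarith [(Complex.re_le_norm (∑ k ∈ S, d k)).trans hcap]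

theorem projection_bounds (n : ℕ) (d : Fin n → ℂ) (θ C : ℝ)
    (hθ : θ ∈ Set.Ico 0 (Real.pi / 2)) (hC : 0 < C)
    (harg : ∀ k, Complex.arg (d k) ∈ Set.Icc 0 (Real.pi / 2 + θ))
    (S : Finset (Fin n))
    (hcap : ‖∑ k ∈ S, d k‖ ≤ C)
    (hIm : 0 ≤ ∑ k ∈ S, (d k).im) :
    (∑ k ∈ S, (d k).im ≤ C) ∧
    (∑ k ∈ S.filter (fun k => (d k).re < 0), (-(d k).re) ≤ C * Real.tan θ) ∧
    (∑ k ∈ S.filter (fun k => 0 ≤ (d k).re), (d k).re ≤ C * (1 + Real.tan θ)) :=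
  projection_bounds_general n d θ C hθ harg S hcap
end

section
/- Let S ⊆ {1,…,n}, and let D_+, D_−, D_I and Ĥ_+, Ĥ_−, Ĥ_I be nonnegative reals satisfying D_+ ≤ Ĥ_+ ≤ D_+ + nL, D_− ≤ Ĥ_− ≤ D_− + nL, D_I ≤ Ĥ_I ≤ D_I + nL for some L > 0. If (D_+ − D_−)² + D_I² ≤ C² and D_+ + D_− ≤ (2P+1)C and D_I ≤ C for some P ≥ 1 and C > 0, and L = εC/(n(P+1)) for some ε ∈ (0,1], then (Ĥ_+ − Ĥ_−)² + Ĥ_I² ≤ C²(1+2ε)². -/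
/-! The rounding moves each coordinate of the point `(D₊ - D₋, D_I)` by at most `t = nL`
in absolute value, so it moves the point from the disc of radius `C` into the disc of radius
`C + 2t`; and `t = εC / (P + 1) ≤ εC`. -/

theorem sq_add_sq_le_of_abs_sub_le {x y x' y' r t : ℝ} (hr : x ^ 2 + y ^ 2 ≤ r ^ 2)
    (hr0 : 0 ≤ r) (hx : |x' - x| ≤ t) (hy : |y' - y| ≤ t) :
    x' ^ 2 + y' ^ 2 ≤ (r + 2 * t) ^ 2 := by
  have hxr : |x| ≤ r := abs_le_of_sq_le_sq (by linarith [sq_nonneg y]) hr0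
  have hyr : |y| ≤ r := abs_le_of_sq_le_sq (by linarith [sq_nonneg x]) hr0
  have hx' : |x'| ≤ |x| + t := by linarith [abs_sub_abs_le_abs_sub x' x]
  have hy' : |y'| ≤ |y| + t := by linarith [abs_sub_abs_le_abs_sub y' y]
  have ht : 0 ≤ t := (abs_nonneg _).trans hx
  calc x' ^ 2 + y' ^ 2 = |x'| ^ 2 + |y'| ^ 2 := by rw [sq_abs, sq_abs]
    _ ≤ (|x| + t) ^ 2 + (|y| + t) ^ 2 := by gcongr
    _ = x ^ 2 + y ^ 2 + 2 * t * (|x| + |y|) + 2 * t ^ 2 := by rw [← sq_abs x, ← sq_abs y]; ring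
    _ ≤ r ^ 2 + 2 * t * (2 * r) + 4 * t ^ 2 := by gcongr <;> linarith [sq_nonneg t]
    _ = (r + 2 * t) ^ 2 := by ring

theorem rounded_projection_feasible_general (n : ℕ) (hn : 1 ≤ n)
    (Dp Dm DI Hp Hm HI L C P ε : ℝ)
    (h1 : Dp ≤ Hp ∧ Hp ≤ Dp + n * L)
    (h2 : Dm ≤ Hm ∧ Hm ≤ Dm + n * L)
    (h3 : DI ≤ HI ∧ HI ≤ DI + n * L)
    (hP : 1 ≤ P) (hC : 0 < C)
    (hfeas : (Dp - Dm) ^ 2 + DI ^ 2 ≤ C ^ 2)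
    (hε : ε ∈ Set.Ioc (0 : ℝ) 1)
    (hLdef : L = ε * C / (n * (P + 1))) :
    (Hp - Hm) ^ 2 + HI ^ 2 ≤ C ^ 2 * (1 + 2 * ε) ^ 2 := by
  have hnL : n * L = ε * C / (P + 1) := by
    have : (n : ℝ) ≠ 0 := Nat.cast_ne_zero.2 (by omega)
    rw [hLdef]
    field_simp
  have hnL_le : n * L ≤ ε * C := hnL ▸ div_le_self (mul_pos hε.1 hC).le (by linarith)
  have hx : |(Hp - Hm) - (Dp - Dm)| ≤ n * L := abs_sub_le_iff.2 ⟨by linarith, by linarith⟩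
  have hy : |HI - DI| ≤ n * L := abs_sub_le_iff.2 ⟨by linarith, by linarith⟩
  calc (Hp - Hm) ^ 2 + HI ^ 2 ≤ (C + 2 * (n * L)) ^ 2 :=
        sq_add_sq_le_of_abs_sub_le hfeas hC.le hx hy
    _ ≤ (C * (1 + 2 * ε)) ^ 2 := by
        have : 0 ≤ n * L := (abs_nonneg _).trans hy
        gcongr
        linarith
    _ = C ^ 2 * (1 + 2 * ε) ^ 2 := by ring

theorem rounded_projection_feasible (n : ℕ) (hn : 1 ≤ n)
    (Dp Dm DI Hp Hm HI L C P ε : ℝ)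
    (hDp : 0 ≤ Dp) (hDm : 0 ≤ Dm) (hDI : 0 ≤ DI)
    (hHp : 0 ≤ Hp) (hHm : 0 ≤ Hm) (hHI : 0 ≤ HI)
    (hL : 0 < L)
    (h1 : Dp ≤ Hp ∧ Hp ≤ Dp + n * L)
    (h2 : Dm ≤ Hm ∧ Hm ≤ Dm + n * L)
    (h3 : DI ≤ HI ∧ HI ≤ DI + n * L)
    (hP : 1 ≤ P) (hC : 0 < C)
    (hfeas : (Dp - Dm) ^ 2 + DI ^ 2 ≤ C ^ 2)
    (hproj : Dp + Dm ≤ (2 * P + 1) * C) (hprojI : DI ≤ C)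
    (hε : ε ∈ Set.Ioc (0 : ℝ) 1)
    (hLdef : L = ε * C / (n * (P + 1))) :
    (Hp - Hm) ^ 2 + HI ^ 2 ≤ C ^ 2 * (1 + 2 * ε) ^ 2 :=
  rounded_projection_feasible_general n hn Dp Dm DI Hp Hm HI L C P ε h1 h2 h3 hP hC hfeas hε hLdef
end

section
/- Let d_1,…,d_n ∈ ℂ with |∑_{k∈S} d_k| ≤ C for some S ⊆ {1,…,n}, Im(d_k) ≥ 0 for all k, and arg(d_k) ≤ π/2 + θ for all k where θ ∈ [0, π/2). Then for the rounded demands ĥd_k (rounding real parts away from 0 and imaginary parts up by multiples of L = εC/(n(tanθ+1)), ε ∈ (0,1]), we have |∑_{k∈S} ĥd_k| ≤ (1+2ε)C. -/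
/-! Rounding each coordinate of a demand to a multiple of `L` moves it by at most `L` per
coordinate, hence by at most `2L` in norm, so the rounded sum over `S` differs from the original
one by at most `2nL = 2εC / (tan θ + 1) ≤ 2εC`, as `tan θ ≥ 0` for `θ ∈ [0, π/2)`. -/

open Finset

section Rounding

variable {K : Type*} [Field K] [LinearOrder K] [IsStrictOrderedRing K]

theorem Int.abs_ceil_sub_self_le_one [FloorRing K] (y : K) : |(⌈y⌉ : K) - y| ≤ 1 :=
  abs_le.2 ⟨by linarith [Int.le_ceil y], by linarith [Int.ceil_lt_add_one y]⟩

theorem Int.abs_floor_sub_self_le_one [FloorRing K] (y : K) : |(⌊y⌋ : K) - y| ≤ 1 :=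
  abs_le.2 ⟨by linarith [Int.sub_one_lt_floor y], by linarith [Int.floor_le y]⟩

theorem abs_mul_sub_le_of_abs_sub_div_le_one {L x m : K} (hL : 0 < L) (h : |m - x / L| ≤ 1) :
    |L * m - x| ≤ L := by
  have hsplit : L * m - x = L * (m - x / L) := by field_simp
  rw [hsplit, abs_mul, abs_of_pos hL]
  exact mul_le_of_le_one_right hL.le h

end Rounding

theorem norm_sum_le_norm_sum_add_card_mul {ι E : Type*} [SeminormedAddCommGroup E]
    (s : Finset ι) (f g : ι → E) {δ : ℝ} (h : ∀ i ∈ s, ‖f i - g i‖ ≤ δ) :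
    ‖∑ i ∈ s, f i‖ ≤ ‖∑ i ∈ s, g i‖ + #s * δ := by
  have hsplit : ∑ i ∈ s, f i = ∑ i ∈ s, g i + ∑ i ∈ s, (f i - g i) := by
    rw [sum_sub_distrib, add_sub_cancel]
  calc ‖∑ i ∈ s, f i‖ ≤ ‖∑ i ∈ s, g i‖ + ‖∑ i ∈ s, (f i - g i)‖ := hsplit ▸ norm_add_le _ _
    _ ≤ ‖∑ i ∈ s, g i‖ + ∑ i ∈ s, ‖f i - g i‖ := by gcongr; exact norm_sum_le _ _
    _ ≤ ‖∑ i ∈ s, g i‖ + #s * δ := by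
      gcongr; simpa using sum_le_card_nsmul s _ δ h

theorem Complex.norm_sub_le_two_mul {z w : ℂ} {δ : ℝ} (hre : |z.re - w.re| ≤ δ)
    (him : |z.im - w.im| ≤ δ) : ‖z - w‖ ≤ 2 * δ :=
  calc ‖z - w‖ ≤ |(z - w).re| + |(z - w).im| := norm_le_abs_re_add_abs_im _
    _ ≤ 2 * δ := by rw [sub_re, sub_im]; linarith

theorem rounded_sum_capacity_general (n : ℕ) (hn : 1 ≤ n) (d : Fin n → ℂ)
    (θ C ε : ℝ) (hθ : θ ∈ Set.Ico 0 (Real.pi / 2)) (hC : 0 < C)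
    (hε : ε ∈ Set.Ioc (0 : ℝ) 1)
    (S : Finset (Fin n))
    (hcap : ‖∑ k ∈ S, d k‖ ≤ C) :
    let L : ℝ := ε * C / (n * (Real.tan θ + 1))
    let hd : Fin n → ℂ := fun k =>
      ((if 0 ≤ (d k).re then L * ⌈(d k).re / L⌉ else L * ⌊(d k).re / L⌋ : ℝ) : ℂ)
        + Complex.I * ((L * ⌈(d k).im / L⌉ : ℝ) : ℂ)
    ‖∑ k ∈ S, hd k‖ ≤ (1 + 2 * ε) * C := by
  intro L hd
  have htan : 0 ≤ Real.tan θ := Real.tan_nonneg_of_nonneg_of_le_pi_div_two hθ.1 hθ.2.le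
  have hn₀ : (0 : ℝ) < n := by exact_mod_cast hn
  have hεC : 0 < ε * C := mul_pos hε.1 hC
  have hL : 0 < L := by positivity
  have herr : ∀ k ∈ S, ‖hd k - d k‖ ≤ 2 * L := by
    intro k _
    apply Complex.norm_sub_le_two_mul
    · simp only [hd, Complex.add_re, Complex.ofReal_re, Complex.re_mul_ofReal, Complex.I_re,
        zero_mul, add_zero]
      split_ifs
      exacts [abs_mul_sub_le_of_abs_sub_div_le_one hL (Int.abs_ceil_sub_self_le_one _),
        abs_mul_sub_le_of_abs_sub_div_le_one hL (Int.abs_floor_sub_self_le_one _)]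
    · simp only [hd, Complex.add_im, Complex.ofReal_im, Complex.im_mul_ofReal, Complex.I_im,
        one_mul, zero_add]
      exact abs_mul_sub_le_of_abs_sub_div_le_one hL (Int.abs_ceil_sub_self_le_one _)
  have hcard : (#S : ℝ) ≤ n := by exact_mod_cast S.card_le_univ.trans (Fintype.card_fin n).le
  have hnL : n * L ≤ ε * C := by
    calc n * L = ε * C / (Real.tan θ + 1) := by
          rw [mul_div_assoc', mul_div_mul_left _ _ hn₀.ne']
      _ ≤ ε * C := div_le_self hεC.le (by linarith)
  calc ‖∑ k ∈ S, hd k‖ ≤ ‖∑ k ∈ S, d k‖ + #S * (2 * L) :=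
        norm_sum_le_norm_sum_add_card_mul S hd d herr
    _ ≤ C + n * (2 * L) := by gcongr
    _ ≤ (1 + 2 * ε) * C := by linarith

theorem rounded_sum_capacity (n : ℕ) (hn : 1 ≤ n) (d : Fin n → ℂ)
    (θ C ε : ℝ) (hθ : θ ∈ Set.Ico 0 (Real.pi / 2)) (hC : 0 < C)
    (hε : ε ∈ Set.Ioc (0 : ℝ) 1)
    (hIm : ∀ k, 0 ≤ (d k).im)
    (harg : ∀ k, Complex.arg (d k) ≤ Real.pi / 2 + θ)
    (S : Finset (Fin n))
    (hcap : ‖∑ k ∈ S, d k‖ ≤ C) :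
    let L : ℝ := ε * C / (n * (Real.tan θ + 1))
    let hd : Fin n → ℂ := fun k =>
      ((if 0 ≤ (d k).re then L * ⌈(d k).re / L⌉ else L * ⌊(d k).re / L⌋ : ℝ) : ℂ)
        + Complex.I * ((L * ⌈(d k).im / L⌉ : ℝ) : ℂ)
    ‖∑ k ∈ S, hd k‖ ≤ (1 + 2 * ε) * C :=
  rounded_sum_capacity_general n hn d θ C ε hθ hC hε S hcap
end
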